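/- The function Ξ(φ) := −arccos( (1/√2) · (4 − 3√2 cos φ)/(3 − 2√2 cos φ) ) is strictly increasing and concave on (0, π/2), with dΞ/dφ = 1/(3 − 2√2 cos φ) and d²Ξ/dφ² = −2√2 sin φ/(3 − 2√2 cos φ)² < 0. -/

import Mathlib

/-!
Write `D = 3 − 2√2 cos φ` and `u = (4 − 3√2 cos φ)/(√2 D)` for the argument of `arccos`.
The identity `2D² − (4 − 3√2 cos φ)² = 2 sin² φ` gives `1 − u² = (sin φ / D)²`, and
`u' = sin φ / D²`, so for `sin φ > 0` the chain rule for `arccos` collapses to `Ξ' = 1 / D`.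
-/

open Real Set

noncomputable section

/-- `Ξ(φ) = −arccos((1/√2)(4 − 3√2 cos φ)/(3 − 2√2 cos φ))`. -/
def Xi (φ : ℝ) : ℝ :=
  - Real.arccos ((1 / Real.sqrt 2) *
    (4 - 3 * Real.sqrt 2 * Real.cos φ) / (3 - 2 * Real.sqrt 2 * Real.cos φ))

open Filter Topology

theorem strictConcaveOn_of_hasDerivAt2_neg {D : Set ℝ} (hD : Convex ℝ D) (hDo : IsOpen D)
    {f f' f'' : ℝ → ℝ} (hf' : ∀ x ∈ D, HasDerivAt f (f' x) x)
    (hf'' : ∀ x ∈ D, HasDerivAt f' (f'' x) x) (hneg : ∀ x ∈ D, f'' x < 0) :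
    StrictConcaveOn ℝ D f := by
  refine strictConcaveOn_of_deriv2_neg hD
    (fun x hx ↦ (hf' x hx).continuousAt.continuousWithinAt) fun x hx ↦ ?_
  rw [hDo.interior_eq] at hx
  have hderiv : deriv f =ᶠ[𝓝 x] f' :=
    eventually_of_mem (hDo.mem_nhds hx) fun y hy ↦ (hf' y hy).deriv
  rw [Function.iterate_succ_apply, Function.iterate_one, hderiv.deriv_eq, (hf'' x hx).deriv]
  exact hneg x hx

theorem three_sub_two_sqrt_two_mul_cos_pos (ψ : ℝ) : 0 < 3 - 2 * √2 * cos ψ := by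
  have h : 2 * √2 < 3 := by
    nlinarith [sq_sqrt (zero_le_two : (0 : ℝ) ≤ 2), sqrt_nonneg 2]
  nlinarith [cos_le_one ψ, neg_one_le_cos ψ, sqrt_nonneg 2]

theorem hasDerivAt_three_sub_two_sqrt_two_mul_cos (φ : ℝ) :
    HasDerivAt (fun ψ ↦ 3 - 2 * √2 * cos ψ) (2 * √2 * sin φ) φ := by
  simpa using ((hasDerivAt_cos φ).const_mul (2 * √2)).const_sub 3

theorem hasDerivAt_one_div_three_sub_two_sqrt_two_mul_cos (φ : ℝ) :
    HasDerivAt (fun ψ ↦ 1 / (3 - 2 * √2 * cos ψ))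
      (-(2 * √2 * sin φ) / (3 - 2 * √2 * cos φ) ^ 2) φ :=
  ((hasDerivAt_const φ (1 : ℝ)).div (hasDerivAt_three_sub_two_sqrt_two_mul_cos φ)
    (three_sub_two_sqrt_two_mul_cos_pos φ).ne').congr_deriv (by ring)

theorem hasDerivAt_Xi_arg (φ : ℝ) :
    HasDerivAt (fun ψ ↦ (1 / √2) * (4 - 3 * √2 * cos ψ) / (3 - 2 * √2 * cos ψ))
      (sin φ / (3 - 2 * √2 * cos φ) ^ 2) φ := by
  have hN : HasDerivAt (fun ψ ↦ (1 / √2) * (4 - 3 * √2 * cos ψ)) (3 * sin φ) φ :=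
    ((((hasDerivAt_cos φ).const_mul (3 * √2)).const_sub 4).const_mul (1 / √2)).congr_deriv
      (by field_simp)
  refine (hN.div (hasDerivAt_three_sub_two_sqrt_two_mul_cos φ)
    (three_sub_two_sqrt_two_mul_cos_pos φ).ne').congr_deriv ?_
  congr 1
  field_simp
  ring

theorem one_sub_sq_Xi_arg (φ : ℝ) :
    1 - ((1 / √2) * (4 - 3 * √2 * cos φ) / (3 - 2 * √2 * cos φ)) ^ 2 =
      (sin φ / (3 - 2 * √2 * cos φ)) ^ 2 := by
  have hD := (three_sub_two_sqrt_two_mul_cos_pos φ).ne'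
  have h2 : √2 ^ 2 = 2 := sq_sqrt zero_le_two
  rw [div_pow, div_pow, mul_pow, one_div_pow, h2, eq_div_iff (pow_ne_zero 2 hD)]
  field_simp
  linear_combination (-cos φ ^ 2) * h2 - 2 * sin_sq_add_cos_sq φ

theorem hasDerivAt_Xi {φ : ℝ} (hφ : 0 < sin φ) :
    HasDerivAt Xi (1 / (3 - 2 * √2 * cos φ)) φ := by
  set u := (1 / √2) * (4 - 3 * √2 * cos φ) / (3 - 2 * √2 * cos φ)
  have hsD : 0 < sin φ / (3 - 2 * √2 * cos φ) :=
    div_pos hφ (three_sub_two_sqrt_two_mul_cos_pos φ)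
  have hu : |u| < 1 := by
    rw [← sq_lt_one_iff_abs_lt_one, ← sub_pos, one_sub_sq_Xi_arg]
    positivity
  obtain ⟨hu₁, hu₂⟩ := abs_lt.mp hu
  refine ((hasDerivAt_arccos hu₁.ne' hu₂.ne).comp φ (hasDerivAt_Xi_arg φ)).neg.congr_deriv ?_
  rw [one_sub_sq_Xi_arg, sqrt_sq hsD.le]
  field_simp

/-- `Ξ` is strictly increasing and concave on `(0, π/2)`, with
`Ξ' (φ) = 1/(3 − 2√2 cos φ)` and `Ξ''(φ) = −2√2 sin φ/(3 − 2√2 cos φ)² < 0`. -/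
theorem Xi_strictMono_concave :
    StrictMonoOn Xi (Ioo 0 (π / 2)) ∧
    StrictConcaveOn ℝ (Ioo 0 (π / 2)) Xi ∧
    ∀ φ ∈ Ioo 0 (π / 2),
      HasDerivAt Xi (1 / (3 - 2 * Real.sqrt 2 * Real.cos φ)) φ ∧
      HasDerivAt (fun ψ => 1 / (3 - 2 * Real.sqrt 2 * Real.cos ψ))
        (-(2 * Real.sqrt 2 * Real.sin φ) / (3 - 2 * Real.sqrt 2 * Real.cos φ) ^ 2) φ ∧
      -(2 * Real.sqrt 2 * Real.sin φ) / (3 - 2 * Real.sqrt 2 * Real.cos φ) ^ 2 < 0 := by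
  have hsin : ∀ φ ∈ Ioo 0 (π / 2), 0 < sin φ := fun φ hφ ↦
    sin_pos_of_pos_of_lt_pi hφ.1 (hφ.2.trans (half_lt_self pi_pos))
  have hXi' : ∀ φ ∈ Ioo 0 (π / 2), HasDerivAt Xi (1 / (3 - 2 * √2 * cos φ)) φ :=
    fun φ hφ ↦ hasDerivAt_Xi (hsin φ hφ)
  have hXi'' : ∀ φ ∈ Ioo 0 (π / 2), -(2 * √2 * sin φ) / (3 - 2 * √2 * cos φ) ^ 2 < 0 :=
    fun φ hφ ↦ div_neg_of_neg_of_pos (neg_neg_of_pos (mul_pos (by positivity) (hsin φ hφ)))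
      (pow_pos (three_sub_two_sqrt_two_mul_cos_pos φ) 2)
  refine ⟨?_, ?_, fun φ hφ ↦
    ⟨hXi' φ hφ, hasDerivAt_one_div_three_sub_two_sqrt_two_mul_cos φ, hXi'' φ hφ⟩⟩
  · refine strictMonoOn_of_hasDerivWithinAt_pos (convex_Ioo _ _)
      (fun φ hφ ↦ (hXi' φ hφ).continuousAt.continuousWithinAt) (fun φ hφ ↦ ?_)
      fun φ _ ↦ one_div_pos.mpr (three_sub_two_sqrt_two_mul_cos_pos φ)
    rw [interior_Ioo] at hφ ⊢
    exact (hXi' φ hφ).hasDerivWithinAt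
  · exact strictConcaveOn_of_hasDerivAt2_neg (convex_Ioo _ _) isOpen_Ioo hXi'
      (fun φ _ ↦ hasDerivAt_one_div_three_sub_two_sqrt_two_mul_cos φ) hXi''
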